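/- arXiv:2110.14727 — 3 statements merged into one kernel-verified Lean document; each statement's English description precedes it below -/
import Mathlib

section
/- Let g ≥ 3 be an integer and let ε = 1 if g is odd, ε = 2 if g is even. The quotient of Z ⊕ Z by the subgroup generated by ((8g+12)/ε, -9) and ((24g+36)/ε, -24) is isomorphic to Z/((8g+12)/ε)Z ⊕ Z/3Z. -/
lemma key_lemma (n : ℕ) :
    Nonempty ((ℤ × ℤ) ⧸ AddSubgroup.closure {((n : ℤ), (-9 : ℤ)), (3 * (n : ℤ), -24)}
      ≃+ ZMod n × ZMod 3) := by
  set φ : ℤ × ℤ →+ ZMod n × ZMod 3 :=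
    AddMonoidHom.prodMap (Int.castAddHom (ZMod n)) (Int.castAddHom (ZMod 3)) with hφ
  have hsurj : Function.Surjective φ := by
    rintro ⟨a, b⟩
    obtain ⟨x, hx⟩ := ZMod.intCast_surjective (n := n) a
    obtain ⟨y, hy⟩ := ZMod.intCast_surjective (n := 3) b
    exact ⟨(x, y), by simp [hφ, hx, hy]⟩
  have hmem : ∀ p : ℤ × ℤ, p ∈ φ.ker ↔ (n : ℤ) ∣ p.1 ∧ (3 : ℤ) ∣ p.2 := by
    rintro ⟨x, y⟩
    simp [hφ, AddMonoidHom.mem_ker, Prod.ext_iff, ZMod.intCast_zmod_eq_zero_iff_dvd]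
  have hker : AddSubgroup.closure {((n : ℤ), (-9 : ℤ)), (3 * (n : ℤ), -24)} = φ.ker := by
    apply le_antisymm
    · rw [AddSubgroup.closure_le]
      rintro p (h | h) <;> subst h <;> rw [SetLike.mem_coe, hmem] <;>
        exact ⟨by norm_num, by norm_num⟩
    · have hv1 : ((n : ℤ), (-9 : ℤ)) ∈
          AddSubgroup.closure {((n : ℤ), (-9 : ℤ)), (3 * (n : ℤ), -24)} :=
        AddSubgroup.subset_closure (by simp)
      have hv2 : (3 * (n : ℤ), (-24 : ℤ)) ∈
          AddSubgroup.closure {((n : ℤ), (-9 : ℤ)), (3 * (n : ℤ), -24)} :=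
        AddSubgroup.subset_closure (by simp)
      have h1 : ((0 : ℤ), (3 : ℤ)) ∈
          AddSubgroup.closure {((n : ℤ), (-9 : ℤ)), (3 * (n : ℤ), -24)} := by
        have e : ((0:ℤ), (3 : ℤ)) = (3*(n:ℤ), (-24:ℤ)) - (3:ℤ) • ((n:ℤ), (-9:ℤ)) := by
          simp [Prod.ext_iff]
        rw [e]
        exact AddSubgroup.sub_mem _ hv2 (AddSubgroup.zsmul_mem _ hv1 3)
      have h2 : (((n : ℤ)), (0 : ℤ)) ∈
          AddSubgroup.closure {((n : ℤ), (-9 : ℤ)), (3 * (n : ℤ), -24)} := by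
        have e : (((n:ℤ)), (0 : ℤ)) = ((n:ℤ), (-9:ℤ)) + (3:ℤ) • ((0:ℤ), (3:ℤ)) := by
          simp [Prod.ext_iff]
        rw [e]
        exact AddSubgroup.add_mem _ hv1 (AddSubgroup.zsmul_mem _ h1 3)
      rintro ⟨x, y⟩ hp
      rw [hmem] at hp
      obtain ⟨⟨a, ha⟩, b, hb⟩ := hp
      have hx : x = (n : ℤ) * a := ha
      have hy : y = 3 * b := hb
      have : ((x : ℤ), (y : ℤ)) = a • (((n : ℤ)), (0 : ℤ)) + b • ((0 : ℤ), (3 : ℤ)) := by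
        simp [Prod.ext_iff]
        exact ⟨by rw [hx]; ring, by rw [hy]; ring⟩
      rw [this]
      exact AddSubgroup.add_mem _ (AddSubgroup.zsmul_mem _ h2 a) (AddSubgroup.zsmul_mem _ h1 b)
  exact ⟨(QuotientAddGroup.quotientAddEquivOfEq hker).trans
    (QuotientAddGroup.quotientKerEquivOfSurjective φ hsurj)⟩

/-- For `g ≥ 3` and `ε = 1` if `g` odd, `ε = 2` if `g` even, the quotient of `ℤ ⊕ ℤ`
by the subgroup generated by `((8g+12)/ε, -9)` and `((24g+36)/ε, -24)` is isomorphic to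
`ℤ/((8g+12)/ε)ℤ ⊕ ℤ/3ℤ`. -/
theorem stmt_5 (g : ℕ) (hg : 3 ≤ g) (ε : ℕ) (hε : ε = if Odd g then 1 else 2) :
    Nonempty ((ℤ × ℤ) ⧸ AddSubgroup.closure
      {(((8 * g + 12) / ε : ℤ), -9), (((24 * g + 36) / ε : ℤ), -24)}
      ≃+ ZMod ((8 * g + 12) / ε) × ZMod 3) := by
  have hdvd : (ε : ℤ) ∣ 8 * (g : ℤ) + 12 := by
    rcases Nat.even_or_odd g with he | ho
    · rw [hε, if_neg (by simpa [Nat.not_odd_iff_even] using he)]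
      obtain ⟨k, hk⟩ := he
      exact ⟨8 * (k : ℤ) + 6, by push_cast [hk]; ring⟩
    · rw [hε, if_pos ho]; exact one_dvd _
  have hε0 : ε ≠ 0 := by rw [hε]; split <;> norm_num
  have hdn : ε ∣ 8 * g + 12 := by
    rcases Nat.even_or_odd g with he | ho
    · rw [hε, if_neg (by simpa [Nat.not_odd_iff_even] using he)]
      obtain ⟨k, hk⟩ := he
      exact ⟨8 * k + 6, by omega⟩
    · rw [hε, if_pos ho]; exact one_dvd _
  obtain ⟨c, hc⟩ := hdn
  have h1 : ((8 * g + 12 : ℤ)) / (ε : ℤ) = (((8 * g + 12) / ε : ℕ) : ℤ) := by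
    have hn : (8 * g + 12) / ε = c := by rw [hc, Nat.mul_div_cancel_left _ (Nat.pos_of_ne_zero hε0)]
    have hz : (8 * (g:ℤ) + 12) = (ε:ℤ) * c := by exact_mod_cast congrArg (Nat.cast : ℕ → ℤ) hc
    rw [show ((8 * g + 12 : ℤ)) = 8 * (g:ℤ) + 12 by push_cast; ring, hz,
      Int.mul_ediv_cancel_left _ (by exact_mod_cast hε0), hn]
  have h2 : ((24 * g + 36 : ℤ)) / (ε : ℤ) = 3 * (((8 * g + 12) / ε : ℕ) : ℤ) := by
    have : (24 * (g : ℤ) + 36) = 3 * (8 * (g : ℤ) + 12) := by ring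
    rw [this, Int.mul_ediv_assoc 3 hdvd, h1]
  rw [show ((8 * g + 12 : ℤ)) / (ε : ℤ) = (((8 * g + 12) / ε : ℕ) : ℤ) from h1,
    show ((24 * g + 36 : ℤ)) / (ε : ℤ) = 3 * (((8 * g + 12) / ε : ℕ) : ℤ) from h2]
  exact key_lemma _
end

section
/- Let g ≥ 3 be an integer and ε = 1 if g is odd, ε = 2 if g is even. The quotient of Z ⊕ Z by the subgroup generated by ((24g+60)/ε, -24) and ((-32g-80)/ε, 36) is isomorphic to Z/((8g+20)/ε)Z ⊕ Z/12Z. -/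
open AddSubgroup

lemma mem_closure_pair' {G : Type*} [AddCommGroup G] (a b x : G)
    (h : ∃ m n : ℤ, m • a + n • b = x) :
    x ∈ AddSubgroup.closure {a, b} := by
  obtain ⟨m, n, rfl⟩ := h
  exact add_mem (zsmul_mem (subset_closure (by simp)) m)
    (zsmul_mem (subset_closure (by simp)) n)

lemma closure_pair_eq (m : ℤ) :
    AddSubgroup.closure ({(3 * m, -24), (-4 * m, 36)} : Set (ℤ × ℤ)) =
    AddSubgroup.closure ({(m, 0), (0, 12)} : Set (ℤ × ℤ)) := by
  apply le_antisymm <;> rw [closure_le] <;> rintro x (rfl | rfl)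
  · exact mem_closure_pair' _ _ _ ⟨3, -2, by
      simp only [Prod.smul_mk, Prod.mk_add_mk, Prod.mk.injEq, smul_eq_mul]
      constructor <;> ring⟩
  · exact mem_closure_pair' _ _ _ ⟨-4, 3, by
      simp only [Prod.smul_mk, Prod.mk_add_mk, Prod.mk.injEq, smul_eq_mul]
      constructor <;> ring⟩
  · exact mem_closure_pair' _ _ _ ⟨3, 2, by
      simp only [Prod.smul_mk, Prod.mk_add_mk, Prod.mk.injEq, smul_eq_mul]
      constructor <;> ring⟩
  · exact mem_closure_pair' _ _ _ ⟨4, 3, by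
      simp only [Prod.smul_mk, Prod.mk_add_mk, Prod.mk.injEq, smul_eq_mul]
      constructor <;> ring⟩

noncomputable def quotEquiv (M : ℕ) :
    (ℤ × ℤ) ⧸ AddSubgroup.closure ({((M : ℤ), 0), (0, 12)} : Set (ℤ × ℤ)) ≃+
      ZMod M × ZMod 12 := by
  letI φ : ℤ × ℤ →+ ZMod M × ZMod 12 :=
    (Int.castAddHom (ZMod M)).prodMap (Int.castAddHom (ZMod 12))
  have hker : φ.ker = AddSubgroup.closure ({((M : ℤ), 0), (0, 12)} : Set (ℤ × ℤ)) := by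
    apply le_antisymm
    · rintro ⟨x, y⟩ hxy
      rw [AddMonoidHom.mem_ker] at hxy
      simp only [φ, AddMonoidHom.coe_prodMap, Int.coe_castAddHom, Prod.map_apply,
        Prod.mk_eq_zero] at hxy
      obtain ⟨hx, hy⟩ := hxy
      have hx' : (M : ℤ) ∣ x := by
        rwa [ZMod.intCast_zmod_eq_zero_iff_dvd] at hx
      have hy' : (12 : ℤ) ∣ y := by
        have := (ZMod.intCast_zmod_eq_zero_iff_dvd y 12).mp hy
        exact_mod_cast this
      obtain ⟨k, rfl⟩ := hx'
      obtain ⟨l, rfl⟩ := hy'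
      exact mem_closure_pair' _ _ _ ⟨k, l, by simp [Prod.ext_iff]; constructor <;> ring⟩
    · rw [closure_le]
      rintro x (rfl | rfl) <;>
        simp [φ, AddMonoidHom.mem_ker, Prod.ext_iff, ZMod.natCast_self] <;> decide
  have hsurj : Function.Surjective φ :=
    Prod.map_surjective.mpr ⟨ZMod.intCast_surjective, ZMod.intCast_surjective⟩
  exact (QuotientAddGroup.quotientAddEquivOfEq hker.symm).trans
    (QuotientAddGroup.quotientKerEquivOfSurjective φ hsurj)

/-- For `g ≥ 3` and `ε = 1` if `g` odd, `ε = 2` if `g` even, the quotient of `ℤ ⊕ ℤ`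
by the subgroup generated by `((24g+60)/ε, -24)` and `((-32g-80)/ε, 36)` is isomorphic to
`ℤ/((8g+20)/ε)ℤ ⊕ ℤ/12ℤ`. -/
theorem stmt_8 (g : ℕ) (hg : 3 ≤ g) (ε : ℕ) (hε : ε = if Odd g then 1 else 2) :
    Nonempty ((ℤ × ℤ) ⧸ AddSubgroup.closure
      {(((24 * g + 60) / ε : ℤ), -24), (((-32 * g - 80) / ε : ℤ), 36)}
      ≃+ ZMod ((8 * g + 20) / ε) × ZMod 12) := by
  set M : ℕ := (8 * g + 20) / ε with hM
  have hε12 : (Odd g ∧ ε = 1) ∨ (¬ Odd g ∧ ε = 2) := by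
    by_cases h : Odd g <;> simp [hε, h]
  have h1 : ((24 * g + 60) / ε : ℤ) = 3 * (M : ℤ) := by
    rcases hε12 with ⟨ho, rfl⟩ | ⟨he, rfl⟩
    · have hMk : M = 8 * g + 20 := by rw [hM]; omega
      rw [hMk]; push_cast; omega
    · rw [Nat.not_odd_iff_even] at he
      obtain ⟨k, rfl⟩ := he
      have hMk : M = 8 * k + 10 := by rw [hM]; omega
      rw [hMk]; push_cast; omega
  have h2 : ((-32 * g - 80) / ε : ℤ) = -4 * (M : ℤ) := by
    rcases hε12 with ⟨ho, rfl⟩ | ⟨he, rfl⟩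
    · have hMk : M = 8 * g + 20 := by rw [hM]; omega
      rw [hMk]; push_cast; omega
    · rw [Nat.not_odd_iff_even] at he
      obtain ⟨k, rfl⟩ := he
      have hMk : M = 8 * k + 10 := by rw [hM]; omega
      rw [hMk]; push_cast; omega
  rw [h1, h2, closure_pair_eq]
  exact ⟨quotEquiv M⟩
end

section
/- Let g ≥ 3 be an integer and ε = 1 if g is even, ε = 2 if g is odd. The quotient of Z ⊕ Z by the subgroup generated by ((24g+84)/ε, -24) and ((-32g-112)/ε, 36) is isomorphic to Z/((8g+28)/ε)Z ⊕ Z/12Z. -/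
lemma aux_stmt_11 (n : ℕ) [NeZero n] :
    Nonempty ((ℤ × ℤ) ⧸ AddSubgroup.closure
      {((3 * n : ℤ), -24), ((-4 * n : ℤ), 36)}
      ≃+ ZMod n × ZMod 12) := by
  set φ : ℤ × ℤ →+ ZMod n × ZMod 12 :=
    (Int.castAddHom (ZMod n)).prodMap (Int.castAddHom (ZMod 12)) with hφ
  have hsurj : Function.Surjective φ := by
    rintro ⟨x, y⟩
    obtain ⟨a, rfl⟩ := ZMod.intCast_surjective x
    obtain ⟨b, rfl⟩ := ZMod.intCast_surjective y
    exact ⟨(a, b), rfl⟩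
  have hker : AddSubgroup.closure {((3 * n : ℤ), -24), ((-4 * n : ℤ), 36)} = φ.ker := by
    apply le_antisymm
    · rw [AddSubgroup.closure_le]
      rintro v (rfl | rfl) <;>
        simp [hφ, AddMonoidHom.mem_ker, Prod.ext_iff] <;>
        constructor <;> first
          | (push_cast; simp [ZMod.natCast_self])
          | decide
    · rintro ⟨a, b⟩ hab
      rw [AddMonoidHom.mem_ker] at hab
      have h1 : ((a : ZMod n)) = 0 := congrArg Prod.fst hab
      have h2 : ((b : ZMod 12)) = 0 := congrArg Prod.snd hab
      rw [ZMod.intCast_zmod_eq_zero_iff_dvd] at h1 h2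
      obtain ⟨k, hk⟩ := h1
      obtain ⟨m, hm⟩ := h2
      have : ((a, b) : ℤ × ℤ) =
          (3 * k + 4 * m) • ((3 * n : ℤ), (-24 : ℤ)) +
          (2 * k + 3 * m) • ((-4 * n : ℤ), (36 : ℤ)) := by
        simp only [Prod.smul_mk, smul_eq_mul, Prod.mk_add_mk, Prod.mk.injEq]
        refine ⟨by rw [hk]; ring, by rw [hm]; push_cast; ring⟩
      rw [this]
      exact AddSubgroup.add_mem _
        (AddSubgroup.zsmul_mem _ (AddSubgroup.subset_closure (by simp)) _)
        (AddSubgroup.zsmul_mem _ (AddSubgroup.subset_closure (by simp)) _)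
  rw [hker]
  exact ⟨QuotientAddGroup.quotientKerEquivOfSurjective φ hsurj⟩

/-- For `g ≥ 3` and `ε = 1` if `g` even, `ε = 2` if `g` odd, the quotient of `ℤ ⊕ ℤ`
by the subgroup generated by `((24g+84)/ε, -24)` and `((-32g-112)/ε, 36)` is isomorphic to
`ℤ/((8g+28)/ε)ℤ ⊕ ℤ/12ℤ`. -/
theorem stmt_11 (g : ℕ) (hg : 3 ≤ g) (ε : ℕ) (hε : ε = if Even g then 1 else 2) :
    Nonempty ((ℤ × ℤ) ⧸ AddSubgroup.closure
      {(((24 * g + 84) / ε : ℤ), -24), (((-32 * g - 112) / ε : ℤ), 36)}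
      ≃+ ZMod ((8 * g + 28) / ε) × ZMod 12) := by
  have hε12 : ε = 1 ∨ ε = 2 := by
    rcases Classical.em (Even g) with h | h <;> simp [hε, h]
  have hεdvd : ε ∣ 8 * g + 28 := by
    rcases hε12 with rfl | rfl
    · exact one_dvd _
    · exact ⟨4 * g + 14, by ring⟩
  set N : ℕ := (8 * g + 28) / ε with hN
  have hNne : NeZero N := by
    constructor
    rcases hε12 with rfl | rfl <;> simp [hN] <;> omega
  have hNcast : (N : ℤ) * ε = 8 * g + 28 := by
    have := Nat.div_mul_cancel hεdvd
    rw [hN]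
    exact_mod_cast this
  have h1 : ((24 * g + 84) / ε : ℤ) = 3 * N := by
    rcases hε12 with rfl | rfl <;> push_cast at hNcast ⊢ <;> omega
  have h2 : ((-32 * g - 112) / ε : ℤ) = -4 * N := by
    rcases hε12 with rfl | rfl <;> push_cast at hNcast ⊢ <;> omega
  rw [h1, h2]
  exact aux_stmt_11 N
end
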